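/- Let 0 < α < 1, u ∈ Δⁿ, w ∈ relint(Δⁿ), and β ∈ relint(αΔⁿ) (i.e., 0 < βᵢ < α for all i and Σᵢ βᵢ = α). Let p be the relative entropy projection of w onto C(β) = {x ∈ Δⁿ : x ≥ β}. Then D(u‖w) − D(u‖p) ≥ ln(1−α). -/

import Mathlib

/-!
Moving a little mass from a coordinate `j` with `p j > β j` to any other coordinate `k` keeps
`p` in `C(β)`, and to first order changes `D(· ‖ w)` by `log (p k / w k) - log (p j / w j)`; so
minimality of `p` forces `p j / w j ≤ p k / w k`. Hence `p i ≤ β i + (p k / w k) w i` for all `i`,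
and summing over `i` gives `p k / w k ≥ 1 - α`. Finally
`D(u ‖ w) - D(u ‖ p) = ∑ uᵢ log (pᵢ / wᵢ) ≥ log (1 - α)`.
-/

open Finset Real Filter Topology Function

section

variable {ι : Type*} [Fintype ι]

noncomputable def relEntropy (u w : ι → ℝ) : ℝ := ∑ i, u i * log (u i / w i)

def cappedSimplex (β : ι → ℝ) : Set (ι → ℝ) :=
  {x | (∀ i, β i ≤ x i) ∧ (∀ i, 0 ≤ x i) ∧ ∑ i, x i = 1}

/-- The tangent line bound for the convex function `y ↦ y log (y / w)`. -/
lemma mul_log_div_add_sub_mul_le {w x y : ℝ} (hw : 0 < w) (hx : 0 < x) (hy : 0 ≤ y) :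
    x * log (x / w) + (y - x) * (log (x / w) + 1) ≤ y * log (y / w) := by
  rcases hy.eq_or_lt with rfl | hy
  · simp only [zero_sub, zero_div, log_zero, mul_zero]
    linarith
  have hlog : 1 - (y / x)⁻¹ ≤ log (y / w) - log (x / w) := by
    rw [← log_div (div_pos hy hw).ne' (div_pos hx hw).ne', div_div_div_cancel_right₀ hw.ne']
    exact one_sub_inv_le_log_of_pos (div_pos hy hx)
  have hyx : y * (1 - (y / x)⁻¹) = y - x := by field_simp
  nlinarith

lemma mul_log_div_sub_mul_log_div (u : ℝ) {p w : ℝ} (hp : p ≠ 0) (hw : w ≠ 0) :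
    u * log (u / w) - u * log (u / p) = u * log (p / w) := by
  rcases eq_or_ne u 0 with rfl | hu
  · simp
  rw [log_div hu hw, log_div hu hp, log_div hp hw]
  ring

lemma sum_update_update_sub_sum {α M : Type*} [DecidableEq ι] [AddCommGroup M]
    (g : ι → α → M) (p : ι → α) {j k : ι} (hjk : j ≠ k) (a b : α) :
    ∑ i, g i (update (update p j a) k b i) - ∑ i, g i (p i) =
      (g j a - g j (p j)) + (g k b - g k (p k)) := by
  rw [← sum_sub_distrib, Fintype.sum_eq_add j k hjk]
  · simp [hjk]
  · rintro i ⟨hij, hik⟩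
    simp [hij, hik]

lemma div_le_div_of_isMinOn_relEntropy {w β p : ι → ℝ} (hw : ∀ i, 0 < w i)
    (hp : p ∈ cappedSimplex β) (hmin : IsMinOn (relEntropy · w) (cappedSimplex β) p)
    {j : ι} (hj : β j < p j) (k : ι) : p j / w j ≤ p k / w k := by
  classical
  by_contra! hlt
  have hjk : j ≠ k := by
    rintro rfl
    exact lt_irrefl _ hlt
  obtain ⟨ε, hε, hεj, hεlt⟩ :
      ∃ ε > 0, ε ≤ p j - β j ∧ (p k + ε) / w k < (p j - ε) / w j := by
    have hsmall : ∀ᶠ ε in 𝓝 (0 : ℝ), ε ≤ p j - β j ∧ (p k + ε) / w k < (p j - ε) / w j :=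
      (eventually_le_nhds (sub_pos.2 hj)).and <|
        ContinuousAt.eventually_lt (by fun_prop) (by fun_prop) (by simpa using hlt)
    have hpos : ∀ᶠ ε in 𝓝[>] (0 : ℝ), 0 < ε := eventually_mem_nhdsWithin
    exact (hpos.and (hsmall.filter_mono nhdsWithin_le_nhds)).exists
  have hk : 0 < p k + ε := by linarith [hp.2.1 k]
  have hj' : 0 < p j - ε :=
    (div_pos_iff_of_pos_right (hw j)).1 ((div_pos hk (hw k)).trans hεlt)
  set x := update (update p j (p j - ε)) k (p k + ε)
  have hx : x ∈ cappedSimplex β := by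
    refine ⟨fun i => ?_, fun i => ?_, ?_⟩
    · simp only [x, update_apply]
      split_ifs <;> subst_vars <;> linarith [hp.1 i]
    · simp only [x, update_apply]
      split_ifs <;> subst_vars <;> linarith [hp.2.1 i]
    · have := sum_update_update_sub_sum (fun _ t => t) p hjk (p j - ε) (p k + ε)
      linarith [hp.2.2]
  have hlog : log ((p k + ε) / w k) < log ((p j - ε) / w j) :=
    log_lt_log (div_pos hk (hw k)) hεlt
  have hdrop : relEntropy x w - relEntropy p w < 0 := by
    rw [relEntropy, relEntropy,
      sum_update_update_sub_sum (fun i t => t * log (t / w i)) p hjk (p j - ε) (p k + ε)]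
    have hbj := mul_log_div_add_sub_mul_le (hw j) hj' (hp.2.1 j)
    have hbk := mul_log_div_add_sub_mul_le (hw k) hk (hp.2.1 k)
    nlinarith [mul_lt_mul_of_pos_left hlog hε]
  linarith [isMinOn_iff.1 hmin x hx]

lemma one_sub_le_div_of_isMinOn_relEntropy {w β p : ι → ℝ} {α : ℝ} (hw : ∀ i, 0 < w i)
    (hw1 : ∑ i, w i = 1) (hβ : ∀ i, 0 ≤ β i) (hβ1 : ∑ i, β i = α)
    (hp : p ∈ cappedSimplex β) (hmin : IsMinOn (relEntropy · w) (cappedSimplex β) p) (k : ι) :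
    1 - α ≤ p k / w k := by
  have hbound : ∀ i, p i ≤ β i + p k / w k * w i := by
    intro i
    rcases (hp.1 i).eq_or_lt with hi | hi
    · rw [← hi]
      exact le_add_of_nonneg_right (mul_nonneg (div_nonneg (hp.2.1 k) (hw k).le) (hw i).le)
    · have := div_le_div_of_isMinOn_relEntropy hw hp hmin hi k
      rw [div_le_iff₀ (hw i)] at this
      linarith [hβ i]
  have hsum := sum_le_sum fun i (_ : i ∈ univ) => hbound i
  rw [sum_add_distrib, ← mul_sum, hw1, hβ1, hp.2.2] at hsum
  linarith

end

theorem stmt_3_general (n : ℕ) (α : ℝ) (hα1 : α < 1)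
    (u w β p : Fin n → ℝ)
    (hu : ∀ i, 0 ≤ u i) (hu1 : ∑ i, u i = 1)
    (hw : ∀ i, 0 < w i) (hw1 : ∑ i, w i = 1)
    (hβ : ∀ i, 0 < β i) (hβ1 : ∑ i, β i = α)
    (hpC : (∀ i, β i ≤ p i) ∧ (∀ i, 0 ≤ p i) ∧ ∑ i, p i = 1)
    (hmin : ∀ x : Fin n → ℝ, (∀ i, β i ≤ x i) → (∀ i, 0 ≤ x i) → ∑ i, x i = 1 →
      ∑ i, p i * Real.log (p i / w i) ≤ ∑ i, x i * Real.log (x i / w i)) :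
    (∑ i, u i * Real.log (u i / w i)) - (∑ i, u i * Real.log (u i / p i)) ≥
      Real.log (1 - α) := by
  have hratio : ∀ i, 1 - α ≤ p i / w i :=
    one_sub_le_div_of_isMinOn_relEntropy hw hw1 (fun i => (hβ i).le) hβ1 hpC
      (isMinOn_iff.2 fun x hx => hmin x hx.1 hx.2.1 hx.2.2)
  have hp : ∀ i, p i ≠ 0 := fun i =>
    ((div_pos_iff_of_pos_right (hw i)).1 ((sub_pos.2 hα1).trans_le (hratio i))).ne'
  calc log (1 - α) = ∑ i, u i * log (1 - α) := by rw [← sum_mul, hu1, one_mul]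
    _ ≤ ∑ i, u i * log (p i / w i) := sum_le_sum fun i _ =>
        mul_le_mul_of_nonneg_left (log_le_log (sub_pos.2 hα1) (hratio i)) (hu i)
    _ = _ := by
        rw [← sum_sub_distrib]
        exact sum_congr rfl fun i _ => (mul_log_div_sub_mul_log_div (u i) (hp i) (hw i).ne').symm

/-- Corollary 1: relative entropy drop under the projection update. -/
theorem stmt_3 (n : ℕ) (α : ℝ) (hα : 0 < α) (hα1 : α < 1)
    (u w β p : Fin n → ℝ)
    (hu : ∀ i, 0 ≤ u i) (hu1 : ∑ i, u i = 1)
    (hw : ∀ i, 0 < w i) (hw1 : ∑ i, w i = 1)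
    (hβ : ∀ i, 0 < β i) (hβα : ∀ i, β i < α) (hβ1 : ∑ i, β i = α)
    (hpC : (∀ i, β i ≤ p i) ∧ (∀ i, 0 ≤ p i) ∧ ∑ i, p i = 1)
    (hmin : ∀ x : Fin n → ℝ, (∀ i, β i ≤ x i) → (∀ i, 0 ≤ x i) → ∑ i, x i = 1 →
      ∑ i, p i * Real.log (p i / w i) ≤ ∑ i, x i * Real.log (x i / w i)) :
    (∑ i, u i * Real.log (u i / w i)) - (∑ i, u i * Real.log (u i / p i)) ≥
      Real.log (1 - α) :=
  stmt_3_general n α hα1 u w β p hu hu1 hw hw1 hβ hβ1 hpC hmin
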